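/- For any β ≥ 0, r ≥ 1, and initial state x₀ = (x₀₁, x₀₂) with positive integer entries, the intensity satisfies N(β, r, x₀) ⪯ N(0, r, x₀); i.e., for every integer n, P[N(β,r,x₀) ≥ n] ≤ P[N(0,r,x₀) ≥ n]. -/

import Mathlib

open MeasureTheory Filter

noncomputable section

/-- Transition probability of the nonlinear Pólya urn with feedback strength `β` and
fitness ratio `r`: from `(x₁,x₂)` move to `(x₁+1,x₂)` with probability
`r·x₁^β/(r·x₁^β + x₂^β)`, to `(x₁,x₂+1)` with probability `x₂^β/(r·x₁^β + x₂^β)`,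
and nowhere else. -/
def urnStep (β r : ℝ) (x y : ℕ × ℕ) : ℝ :=
  if y = (x.1 + 1, x.2) then r * (x.1 : ℝ) ^ β / (r * (x.1 : ℝ) ^ β + (x.2 : ℝ) ^ β)
  else if y = (x.1, x.2 + 1) then (x.2 : ℝ) ^ β / (r * (x.1 : ℝ) ^ β + (x.2 : ℝ) ^ β)
  else 0

/-- `μ` is the law (on trajectories `ℕ → ℕ × ℕ`) of a `(β,r,x₀)`-urn process:
a probability measure under which each finite initial trajectory starting at `x₀`
has probability equal to the product of the one-step urn transition probabilities. -/
def IsUrnProcess (μ : Measure (ℕ → ℕ × ℕ)) (β r : ℝ) (x₀ : ℕ × ℕ) : Prop :=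
  IsProbabilityMeasure μ ∧
  ∀ (n : ℕ) (path : ℕ → ℕ × ℕ), path 0 = x₀ →
    (μ {ω | ∀ t ≤ n, ω t = path t}).toReal
      = ∏ t ∈ Finset.range n, urnStep β r (path t) (path (t + 1))

/-- `N_t`: the number of ties up to (and including) time `t`. -/
def numTiesUpTo (ω : ℕ → ℕ × ℕ) (t : ℕ) : ℕ :=
  ((Finset.range (t + 1)).filter (fun j => (ω j).1 = (ω j).2)).card

/-- The intensity `N`: the total number of ties (possibly `∞`). -/
def intensity (ω : ℕ → ℕ × ℕ) : ℕ∞ :=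
  {t : ℕ | (ω t).1 = (ω t).2}.encard

/-- `T_n` (for `n ≥ 1`): the time of the `n`-th tie, i.e. the (unique, if it exists) time `s`
at which a tie occurs and the number of ties up to `s` equals `n`; `⊤` if there is no such time. -/
def nthTieTime (n : ℕ) (ω : ℕ → ℕ × ℕ) : ℕ∞ :=
  sInf {t : ℕ∞ | ∃ s : ℕ, t = (s : ℕ∞) ∧ (ω s).1 = (ω s).2 ∧ numTiesUpTo ω s = n}

/-- The event `{T ≥ t}` where `T` is the duration (time of the last tie, with the convention
`T = -1` if there is no tie): for `t : ℕ` this event is exactly `{∃ s ≥ t, a tie occurs at s}`. -/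
def durationTail (t : ℕ) : Set (ℕ → ℕ × ℕ) :=
  {ω | ∃ s, t ≤ s ∧ (ω s).1 = (ω s).2}

/-!
Off the diagonal, feedback `β ≥ 0` makes the step towards the diagonal at most as likely as for
`β = 0`, and on the diagonal both urns step alike. Since for `β = 0` the chance of reaching the
diagonal within `t` steps decreases with the distance to it, a one-step comparison shows that the
probability of a first tie within `t` steps, and of each later return to the diagonal, is at most
the one for `β = 0`. Splitting at ties, `n + 1` ties within `t` steps therefore have probability at
most `returnProb r t ^ n` times that of a first tie, where `returnProb r t` is the return
probability of the feedback-free walk; that walk is translation invariant along the diagonal, so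
it attains this product once its horizon is enlarged to `t + t n`. Under an urn process the law of
the number of ties up to time `t` is a sum of cylinder probabilities, which reproduces the
first-step recursion `tieProb`; letting `t → ∞` on both sides gives the domination.
-/

namespace Urn

variable {β r : ℝ} {x : ℕ × ℕ}

def succFst (x : ℕ × ℕ) : ℕ × ℕ := (x.1 + 1, x.2)

def succSnd (x : ℕ × ℕ) : ℕ × ℕ := (x.1, x.2 + 1)

lemma succFst_ne_succSnd (x : ℕ × ℕ) : succFst x ≠ succSnd x := by
  simp [succFst, succSnd]

lemma succFst_ne_zero (x : ℕ × ℕ) : succFst x ≠ 0 := by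
  simp [succFst, Prod.ext_iff]

lemma succSnd_ne_zero (x : ℕ × ℕ) : succSnd x ≠ 0 := by
  simp [succSnd, Prod.ext_iff]

lemma succFst_succSnd (x : ℕ × ℕ) : succFst (succSnd x) = succSnd (succFst x) := rfl

lemma succFst_swap (x : ℕ × ℕ) : succFst x.swap = (succSnd x).swap := rfl

lemma succSnd_swap (x : ℕ × ℕ) : succSnd x.swap = (succFst x).swap := rfl

lemma urnStep_succFst (x : ℕ × ℕ) :
    urnStep β r x (succFst x) = r * (x.1 : ℝ) ^ β / (r * (x.1 : ℝ) ^ β + (x.2 : ℝ) ^ β) := by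
  simp [urnStep, succFst]

lemma urnStep_succSnd (x : ℕ × ℕ) :
    urnStep β r x (succSnd x) = (x.2 : ℝ) ^ β / (r * (x.1 : ℝ) ^ β + (x.2 : ℝ) ^ β) := by
  simp [urnStep, succSnd]

lemma urnStep_of_ne {y : ℕ × ℕ} (h₁ : y ≠ succFst x) (h₂ : y ≠ succSnd x) :
    urnStep β r x y = 0 := by
  simp_all [urnStep, succFst, succSnd]

lemma urnStep_nonneg (hr : 0 ≤ r) (x y : ℕ × ℕ) : 0 ≤ urnStep β r x y := by
  unfold urnStep
  split_ifs <;> positivity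

lemma urnStep_succFst_add_succSnd (hr : 0 < r) (hx : x ≠ 0) :
    urnStep β r x (succFst x) + urnStep β r x (succSnd x) = 1 := by
  have hpos : 0 < r * (x.1 : ℝ) ^ β + (x.2 : ℝ) ^ β := by
    rcases Nat.eq_zero_or_pos x.2 with h₂ | h₂
    · have h₁ : 0 < x.1 := Nat.pos_of_ne_zero fun h₁ => hx (Prod.ext h₁ h₂)
      have := Real.rpow_pos_of_pos (Nat.cast_pos.2 h₁) β
      positivity
    · have := Real.rpow_pos_of_pos (Nat.cast_pos.2 h₂) β
      positivity
  rw [urnStep_succFst, urnStep_succSnd, ← add_div, div_self hpos.ne']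

lemma urnStep_zero_succFst (r : ℝ) (x : ℕ × ℕ) : urnStep 0 r x (succFst x) = r / (r + 1) := by
  simp [urnStep_succFst]

lemma urnStep_zero_succSnd (r : ℝ) (x : ℕ × ℕ) : urnStep 0 r x (succSnd x) = 1 / (r + 1) := by
  simp [urnStep_succSnd]

lemma urnStep_eq_urnStep_zero_of_fst_eq_snd (hx : x ≠ 0) (hd : x.1 = x.2) (y : ℕ × ℕ) :
    urnStep β r x y = urnStep 0 r x y := by
  have hpos : (0 : ℝ) < (x.2 : ℝ) ^ β := by
    refine Real.rpow_pos_of_pos (Nat.cast_pos.2 (Nat.pos_of_ne_zero fun h₂ => hx ?_)) β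
    exact Prod.ext (hd.trans h₂) h₂
  unfold urnStep
  rw [hd]
  split_ifs
  · rw [Real.rpow_zero, ← add_one_mul, mul_div_mul_right _ _ hpos.ne', mul_one]
  · rw [Real.rpow_zero, ← add_one_mul, div_mul_cancel_right₀ hpos.ne', one_div, mul_one]
  · rfl

lemma urnStep_succSnd_le (hβ : 0 ≤ β) (hr : 0 ≤ r) (h : x.2 ≤ x.1) :
    urnStep β r x (succSnd x) ≤ urnStep 0 r x (succSnd x) := by
  have hle : (x.2 : ℝ) ^ β ≤ (x.1 : ℝ) ^ β :=
    Real.rpow_le_rpow (Nat.cast_nonneg _) (Nat.cast_le.2 h) hβ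
  have h₂ : (0 : ℝ) ≤ (x.2 : ℝ) ^ β := by positivity
  rw [urnStep_succSnd, urnStep_zero_succSnd]
  rcases (show (0 : ℝ) ≤ r * (x.1 : ℝ) ^ β + (x.2 : ℝ) ^ β by positivity).eq_or_lt with h0 | h0
  · rw [← h0, div_zero]; positivity
  · rw [div_le_div_iff₀ h0 (by positivity)]
    nlinarith

lemma urnStep_swap (hr : r ≠ 0) (x y : ℕ × ℕ) :
    urnStep β r x.swap y.swap = urnStep β r⁻¹ x y := by
  by_cases h₁ : y = succFst x
  · rw [h₁, ← succSnd_swap, urnStep_succSnd, urnStep_succFst]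
    field_simp
    simp only [Prod.fst_swap, Prod.snd_swap, add_comm]
  by_cases h₂ : y = succSnd x
  · rw [h₂, ← succFst_swap, urnStep_succSnd, urnStep_succFst]
    field_simp
    simp only [Prod.fst_swap, Prod.snd_swap, add_comm]
  rw [urnStep_of_ne h₁ h₂, urnStep_of_ne] <;>
    simpa only [succFst_swap, succSnd_swap, Ne, Prod.swap_inj]

def expectNext (β r : ℝ) (f : ℕ × ℕ → ℝ) (x : ℕ × ℕ) : ℝ :=
  urnStep β r x (succFst x) * f (succFst x) + urnStep β r x (succSnd x) * f (succSnd x)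

section expectNext

variable {f g : ℕ × ℕ → ℝ}

lemma expectNext_mono (hr : 0 ≤ r) (h₁ : f (succFst x) ≤ g (succFst x))
    (h₂ : f (succSnd x) ≤ g (succSnd x)) : expectNext β r f x ≤ expectNext β r g x :=
  add_le_add (mul_le_mul_of_nonneg_left h₁ (urnStep_nonneg hr _ _))
    (mul_le_mul_of_nonneg_left h₂ (urnStep_nonneg hr _ _))

lemma expectNext_mono_of_forall (hr : 0 ≤ r) (h : ∀ y ≠ 0, f y ≤ g y) :
    expectNext β r f x ≤ expectNext β r g x :=
  expectNext_mono hr (h _ (succFst_ne_zero x)) (h _ (succSnd_ne_zero x))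

lemma expectNext_congr (hr : 0 ≤ r) (h : ∀ y ≠ 0, f y = g y) :
    expectNext β r f x = expectNext β r g x :=
  le_antisymm (expectNext_mono_of_forall hr fun y hy => (h y hy).le)
    (expectNext_mono_of_forall hr fun y hy => (h y hy).ge)

lemma expectNext_nonneg (hr : 0 ≤ r) (h : ∀ y, 0 ≤ f y) : 0 ≤ expectNext β r f x :=
  add_nonneg (mul_nonneg (urnStep_nonneg hr _ _) (h _)) (mul_nonneg (urnStep_nonneg hr _ _) (h _))

lemma expectNext_const (hr : 0 < r) (hx : x ≠ 0) (c : ℝ) :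
    expectNext β r (fun _ => c) x = c := by
  rw [expectNext, ← add_mul, urnStep_succFst_add_succSnd hr hx, one_mul]

lemma expectNext_mul_const (c : ℝ) :
    expectNext β r (fun y => f y * c) x = expectNext β r f x * c := by
  simp only [expectNext]; ring

lemma expectNext_const_mul (c : ℝ) :
    expectNext β r (fun y => c * f y) x = c * expectNext β r f x := by
  simp only [expectNext]; ring

lemma expectNext_zero (r : ℝ) (f : ℕ × ℕ → ℝ) (x : ℕ × ℕ) :
    expectNext 0 r f x = r / (r + 1) * f (succFst x) + 1 / (r + 1) * f (succSnd x) := by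
  rw [expectNext, urnStep_zero_succFst, urnStep_zero_succSnd]

lemma expectNext_of_fst_eq_snd (hx : x ≠ 0) (hd : x.1 = x.2) :
    expectNext β r f x = expectNext 0 r f x := by
  simp only [expectNext, urnStep_eq_urnStep_zero_of_fst_eq_snd hx hd]

lemma expectNext_swap (hr : r ≠ 0) (f : ℕ × ℕ → ℝ) (x : ℕ × ℕ) :
    expectNext β r f x.swap = expectNext β r⁻¹ (fun y => f y.swap) x := by
  rw [expectNext, expectNext, succFst_swap, succSnd_swap, urnStep_swap hr, urnStep_swap hr,
    add_comm]

end expectNext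

def tieInd (x : ℕ × ℕ) : ℕ := if x.1 = x.2 then 1 else 0

/-- `tieProb β r t n x` is the probability that the urn started at `x` has at least `n` ties
at times `0, …, t` (`n - tieInd x` truncates at `0`, where no further tie is required). -/
def tieProb (β r : ℝ) : ℕ → ℕ → ℕ × ℕ → ℝ
  | 0, n, x => if n ≤ tieInd x then 1 else 0
  | t + 1, n, x => expectNext β r (tieProb β r t (n - tieInd x)) x

lemma tieInd_of_eq (h : x.1 = x.2) : tieInd x = 1 := if_pos h

lemma tieInd_of_ne (h : x.1 ≠ x.2) : tieInd x = 0 := if_neg h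

lemma tieInd_swap (x : ℕ × ℕ) : tieInd x.swap = tieInd x := by
  simp [tieInd, eq_comm]

lemma tieInd_eq_of_add_eq {y : ℕ × ℕ} (h : x.1 + y.2 = y.1 + x.2) : tieInd x = tieInd y := by
  unfold tieInd; split_ifs <;> omega

lemma tieProb_zero (β r : ℝ) (n : ℕ) (x : ℕ × ℕ) :
    tieProb β r 0 n x = if n ≤ tieInd x then 1 else 0 := rfl

lemma tieProb_succ (β r : ℝ) (t n : ℕ) (x : ℕ × ℕ) :
    tieProb β r (t + 1) n x = expectNext β r (tieProb β r t (n - tieInd x)) x := rfl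

lemma tieProb_succ_of_eq (h : x.1 = x.2) (t n : ℕ) :
    tieProb β r (t + 1) (n + 1) x = expectNext β r (tieProb β r t n) x := by
  rw [tieProb_succ, tieInd_of_eq h, Nat.add_sub_cancel]

lemma tieProb_succ_of_ne (h : x.1 ≠ x.2) (t n : ℕ) :
    tieProb β r (t + 1) n x = expectNext β r (tieProb β r t n) x := by
  rw [tieProb_succ, tieInd_of_ne h, Nat.sub_zero]

lemma tieProb_nonneg (hr : 0 ≤ r) (t n : ℕ) (x : ℕ × ℕ) : 0 ≤ tieProb β r t n x := by
  induction t generalizing n x with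
  | zero => rw [tieProb_zero]; positivity
  | succ t ih => exact expectNext_nonneg hr (ih _)

section

variable (hr : 0 < r)
include hr

lemma tieProb_le_one (t n : ℕ) (hx : x ≠ 0) : tieProb β r t n x ≤ 1 := by
  induction t generalizing n x with
  | zero => rw [tieProb_zero]; split_ifs <;> norm_num
  | succ t ih =>
    rw [tieProb_succ, ← expectNext_const (β := β) hr hx 1]
    exact expectNext_mono_of_forall hr.le fun y hy => ih _ hy

lemma tieProb_zero_ties (t : ℕ) (hx : x ≠ 0) : tieProb β r t 0 x = 1 := by
  induction t generalizing x with
  | zero => simp [tieProb_zero]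
  | succ t ih =>
    rw [tieProb_succ, Nat.zero_sub, expectNext_congr hr.le fun y hy => ih hy,
      expectNext_const hr hx]

lemma tieProb_one_of_fst_eq_snd (t : ℕ) (hx : x ≠ 0) (hd : x.1 = x.2) :
    tieProb β r t 1 x = 1 := by
  cases t with
  | zero => simp [tieProb_zero, tieInd_of_eq hd]
  | succ t =>
    rw [tieProb_succ, tieInd_of_eq hd, Nat.sub_self,
      expectNext_congr hr.le fun y hy => tieProb_zero_ties hr t hy, expectNext_const hr hx]

lemma tieProb_le_tieProb_succ (t n : ℕ) (hx : x ≠ 0) :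
    tieProb β r t n x ≤ tieProb β r (t + 1) n x := by
  induction t generalizing n x with
  | zero =>
    rw [tieProb_zero]
    split_ifs with h
    · rw [tieProb_succ, Nat.sub_eq_zero_of_le h,
        expectNext_congr hr.le fun y hy => tieProb_zero_ties hr 0 hy, expectNext_const hr hx]
    · exact tieProb_nonneg hr.le _ _ _
  | succ t ih => exact expectNext_mono_of_forall hr.le fun y hy => ih _ hy

lemma monotone_tieProb (n : ℕ) (hx : x ≠ 0) : Monotone fun t => tieProb β r t n x :=
  monotone_nat_of_le_succ fun t => tieProb_le_tieProb_succ hr t n hx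

end

lemma tieProb_swap (hr : r ≠ 0) (t n : ℕ) (x : ℕ × ℕ) :
    tieProb β r t n x.swap = tieProb β r⁻¹ t n x := by
  induction t generalizing n x with
  | zero => simp only [tieProb_zero, tieInd_swap]
  | succ t ih =>
    simp only [tieProb_succ, tieInd_swap, expectNext_swap hr, ih]

lemma tieProb_zero_congr (t n : ℕ) {x y : ℕ × ℕ} (h : x.1 + y.2 = y.1 + x.2) :
    tieProb 0 r t n x = tieProb 0 r t n y := by
  induction t generalizing n x y with
  | zero => rw [tieProb_zero, tieProb_zero, tieInd_eq_of_add_eq h]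
  | succ t ih =>
    rw [tieProb_succ, tieProb_succ, expectNext_zero, expectNext_zero, tieInd_eq_of_add_eq h,
      ih _ (show (succFst x).1 + (succFst y).2 = (succFst y).1 + (succFst x).2 by
        simp only [succFst]; omega),
      ih _ (show (succSnd x).1 + (succSnd y).2 = (succSnd y).1 + (succSnd x).2 by
        simp only [succSnd]; omega)]

lemma tieProb_zero_one_succFst_le_succSnd (hr : 0 < r) (t : ℕ) (h : x.2 < x.1) :
    tieProb 0 r t 1 (succFst x) ≤ tieProb 0 r t 1 (succSnd x) := by
  induction t generalizing x with
  | zero =>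
    rw [tieProb_zero, tieInd_of_ne (by simp only [succFst]; omega),
      if_neg (Nat.not_succ_le_zero 0)]
    exact tieProb_nonneg hr.le _ _ _
  | succ t ih =>
    by_cases hd : (succSnd x).1 = (succSnd x).2
    · rw [tieProb_one_of_fst_eq_snd hr _ (succSnd_ne_zero x) hd]
      exact tieProb_le_one hr _ _ (succFst_ne_zero x)
    have hfar := ih (x := succFst x) (by simp only [succFst]; omega)
    have hnear := ih (x := succSnd x) (by simp only [succSnd] at hd ⊢; omega)
    rw [← succFst_succSnd] at hfar
    rw [tieProb_succ_of_ne (by simp only [succFst]; omega), tieProb_succ_of_ne hd,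
      expectNext_zero, expectNext_zero, ← succFst_succSnd]
    gcongr

lemma tieProb_one_le_tieProb_zero_of_snd_le_fst (hβ : 0 ≤ β) (hr : 0 < r) (t : ℕ)
    (hx : x ≠ 0) (h : x.2 ≤ x.1) : tieProb β r t 1 x ≤ tieProb 0 r t 1 x := by
  induction t generalizing x with
  | zero => rfl
  | succ t ih =>
    by_cases hd : x.1 = x.2
    · rw [tieProb_one_of_fst_eq_snd hr _ hx hd, tieProb_one_of_fst_eq_snd hr _ hx hd]
    have hfar := ih (succFst_ne_zero x) (by simp only [succFst]; omega)
    have hnear := ih (succSnd_ne_zero x) (by simp only [succSnd]; omega)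
    have hstep := urnStep_succSnd_le hβ hr.le h
    have hmono := tieProb_zero_one_succFst_le_succSnd hr t (lt_of_le_of_ne h (Ne.symm hd))
    rw [tieProb_succ_of_ne hd, tieProb_succ_of_ne hd]
    calc _ ≤ expectNext β r (tieProb 0 r t 1) x := expectNext_mono hr.le hfar hnear
      _ ≤ _ := by
        rw [expectNext, expectNext, eq_sub_of_add_eq (urnStep_succFst_add_succSnd hr hx),
          eq_sub_of_add_eq (urnStep_succFst_add_succSnd (β := 0) hr hx)]
        -- shifting probability from the far successor to the near one can only help
        linarith [mul_le_mul_of_nonneg_left hmono (sub_nonneg.2 hstep)]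

lemma tieProb_one_le_tieProb_zero (hβ : 0 ≤ β) (hr : 0 < r) (t : ℕ) (hx : x ≠ 0) :
    tieProb β r t 1 x ≤ tieProb 0 r t 1 x := by
  rcases le_total x.2 x.1 with h | h
  · exact tieProb_one_le_tieProb_zero_of_snd_le_fst hβ hr t hx h
  · have := tieProb_one_le_tieProb_zero_of_snd_le_fst hβ (inv_pos.2 hr) t
      (x := x.swap) (by simpa [Prod.ext_iff, and_comm] using hx) h
    rwa [tieProb_swap (inv_ne_zero hr.ne'), tieProb_swap (inv_ne_zero hr.ne'), inv_inv] at this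

-- `(1, 1)` stands for any diagonal point (`tieProb_zero_eq_of_fst_eq_snd`);
-- the second tie is the return.
def returnProb (r : ℝ) (t : ℕ) : ℝ := tieProb 0 r t 2 (1, 1)

lemma tieProb_zero_eq_of_fst_eq_snd (t n : ℕ) (hd : x.1 = x.2) :
    tieProb 0 r t n x = tieProb 0 r t n (1, 1) :=
  tieProb_zero_congr t n (by simp only; omega)

lemma returnProb_nonneg (hr : 0 ≤ r) (t : ℕ) : 0 ≤ returnProb r t :=
  tieProb_nonneg hr t 2 (1, 1)

lemma monotone_returnProb (hr : 0 < r) : Monotone (returnProb r) :=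
  monotone_tieProb hr 2 (by simp)

lemma tieProb_two_le_returnProb (hβ : 0 ≤ β) (hr : 0 < r) (t : ℕ) (hx : x ≠ 0)
    (hd : x.1 = x.2) : tieProb β r t 2 x ≤ returnProb r t := by
  cases t with
  | zero =>
    rw [tieProb_zero, tieInd_of_eq hd, if_neg (by norm_num)]
    exact returnProb_nonneg hr.le 0
  | succ t =>
    rw [returnProb, ← tieProb_zero_eq_of_fst_eq_snd _ _ hd, tieProb_succ_of_eq hd,
      tieProb_succ_of_eq hd, expectNext_of_fst_eq_snd hx hd]
    exact expectNext_mono_of_forall hr.le fun y hy => tieProb_one_le_tieProb_zero hβ hr t hy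

lemma tieProb_succ_le_returnProb_pow_mul (hβ : 0 ≤ β) (hr : 0 < r) (t n : ℕ) (hx : x ≠ 0) :
    tieProb β r t (n + 1) x ≤ returnProb r t ^ n * tieProb β r t 1 x := by
  induction t generalizing n x with
  | zero =>
    rcases n with _ | n
    · simp
    · rw [tieProb_zero, if_neg (by unfold tieInd; split_ifs <;> omega)]
      exact mul_nonneg (pow_nonneg (returnProb_nonneg hr.le 0) _) (tieProb_nonneg hr.le _ _ _)
  | succ t ih =>
    have hF := returnProb_nonneg hr.le t
    have hF' := returnProb_nonneg hr.le (t + 1)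
    have hFF := monotone_returnProb hr (Nat.le_succ t)
    have hQ := tieProb_nonneg (β := β) hr.le (t + 1) 1 x
    have hnext (k : ℕ) : expectNext β r (tieProb β r t (k + 1)) x ≤
        returnProb r t ^ k * expectNext β r (tieProb β r t 1) x := by
      rw [← expectNext_const_mul]
      exact expectNext_mono_of_forall hr.le fun y hy => ih k hy
    by_cases hd : x.1 = x.2
    · rcases n with _ | n
      · simp
      calc tieProb β r (t + 1) (n + 1 + 1) x
          ≤ returnProb r t ^ n * tieProb β r (t + 1) 2 x := by
            rw [tieProb_succ_of_eq hd, tieProb_succ_of_eq hd]; exact hnext n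
        _ ≤ returnProb r t ^ n * returnProb r (t + 1) := by
            gcongr; exact tieProb_two_le_returnProb hβ hr _ hx hd
        _ ≤ returnProb r (t + 1) ^ (n + 1) * tieProb β r (t + 1) 1 x := by
            rw [tieProb_one_of_fst_eq_snd hr _ hx hd, mul_one, pow_succ]; gcongr
    · calc tieProb β r (t + 1) (n + 1) x ≤ returnProb r t ^ n * tieProb β r (t + 1) 1 x := by
            rw [tieProb_succ_of_ne hd, tieProb_succ_of_ne hd]; exact hnext n
        _ ≤ returnProb r (t + 1) ^ n * tieProb β r (t + 1) 1 x := by gcongr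

-- The last of the first `m + 1` ties is on the diagonal, where the walk restarts as from `(1, 1)`.
lemma tieProb_zero_mul_le (hr : 0 < r) (s n t m : ℕ) (hx : x ≠ 0) :
    tieProb 0 r t (m + 1) x * tieProb 0 r s (n + 1) (1, 1) ≤
      tieProb 0 r (t + s) (m + n + 1) x := by
  induction t generalizing m x with
  | zero =>
    rw [tieProb_zero]
    split_ifs with h
    · have hd : x.1 = x.2 := by by_contra hd; rw [tieInd_of_ne hd] at h; omega
      obtain rfl : m = 0 := by rw [tieInd_of_eq hd] at h; omega
      rw [one_mul, zero_add, zero_add, tieProb_zero_eq_of_fst_eq_snd _ _ hd]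
    · rw [zero_mul]; exact tieProb_nonneg hr.le _ _ _
  | succ t ih =>
    have hnext (k : ℕ) : expectNext 0 r (tieProb 0 r t (k + 1)) x * tieProb 0 r s (n + 1) (1, 1) ≤
        expectNext 0 r (tieProb 0 r (t + s) (k + n + 1)) x := by
      rw [← expectNext_mul_const]
      exact expectNext_mono_of_forall hr.le fun y hy => ih k hy
    rw [show t + 1 + s = t + s + 1 by omega]
    by_cases hd : x.1 = x.2
    · rcases m with _ | m
      · rw [tieProb_one_of_fst_eq_snd hr _ hx hd, one_mul, zero_add,
          ← tieProb_zero_eq_of_fst_eq_snd _ _ hd]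
        exact monotone_tieProb hr _ hx (by omega)
      · rw [tieProb_succ_of_eq hd, show m + 1 + n + 1 = m + n + 1 + 1 by omega,
          tieProb_succ_of_eq hd]
        exact hnext m
    · rw [tieProb_succ_of_ne hd, tieProb_succ_of_ne hd]
      exact hnext m

lemma returnProb_pow_le (hr : 0 < r) (t n : ℕ) :
    returnProb r t ^ n ≤ tieProb 0 r (t * n) (n + 1) (1, 1) := by
  induction n with
  | zero => rw [pow_zero, tieProb_one_of_fst_eq_snd hr _ (by simp) rfl]
  | succ n ih =>
    calc returnProb r t ^ (n + 1) ≤ returnProb r t * tieProb 0 r (t * n) (n + 1) (1, 1) := by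
          rw [pow_succ']; gcongr; exact returnProb_nonneg hr.le t
      _ ≤ tieProb 0 r (t * (n + 1)) (n + 1 + 1) (1, 1) := by
          rw [mul_add_one, add_comm (t * n), show n + 1 + 1 = 1 + n + 1 by omega]
          exact tieProb_zero_mul_le hr (t * n) n t 1 (by simp)

lemma exists_tieProb_le_tieProb_zero (hβ : 0 ≤ β) (hr : 0 < r) (t n : ℕ) (hx : x ≠ 0) :
    ∃ s, tieProb β r t n x ≤ tieProb 0 r s n x := by
  rcases n with _ | n
  · exact ⟨t, by rw [tieProb_zero_ties hr t hx, tieProb_zero_ties hr t hx]⟩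
  refine ⟨t + t * n, ?_⟩
  calc tieProb β r t (n + 1) x ≤ returnProb r t ^ n * tieProb β r t 1 x :=
        tieProb_succ_le_returnProb_pow_mul hβ hr t n hx
    _ ≤ tieProb 0 r t 1 x * tieProb 0 r (t * n) (n + 1) (1, 1) := by
        rw [mul_comm]
        exact mul_le_mul (tieProb_one_le_tieProb_zero hβ hr t hx) (returnProb_pow_le hr t n)
          (pow_nonneg (returnProb_nonneg hr.le t) n) (tieProb_nonneg hr.le _ _ _)
    _ ≤ tieProb 0 r (t + t * n) (n + 1) x := by
        simpa using tieProb_zero_mul_le hr (t * n) n t 0 hx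

section paths

open scoped ENNReal

variable {t : ℕ}

def pathTies (v : Fin (t + 1) → ℕ × ℕ) : ℕ := ∑ j, tieInd (v j)

def pathWeight (β r : ℝ) (v : Fin (t + 1) → ℕ × ℕ) : ℝ≥0∞ :=
  ∏ s : Fin t, ENNReal.ofReal (urnStep β r (v s.castSucc) (v s.succ))

lemma pathTies_cons (y : ℕ × ℕ) (w : Fin (t + 1) → ℕ × ℕ) :
    pathTies (Fin.cons y w : Fin (t + 2) → ℕ × ℕ) = tieInd y + pathTies w := by
  simp only [pathTies, Fin.sum_univ_succ, Fin.cons_zero, Fin.cons_succ]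

lemma pathWeight_cons (y : ℕ × ℕ) (w : Fin (t + 1) → ℕ × ℕ) :
    pathWeight β r (Fin.cons y w : Fin (t + 2) → ℕ × ℕ) =
      ENNReal.ofReal (urnStep β r y (w 0)) * pathWeight β r w := by
  simp only [pathWeight, Fin.prod_univ_succ, Fin.castSucc_zero, Fin.cons_zero, Fin.castSucc_succ,
    Fin.cons_succ]

lemma ofReal_urnStep (x z : ℕ × ℕ) :
    ENNReal.ofReal (urnStep β r x z) =
      (if z = succFst x then ENNReal.ofReal (urnStep β r x (succFst x)) else 0) +
        (if z = succSnd x then ENNReal.ofReal (urnStep β r x (succSnd x)) else 0) := by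
  by_cases h₁ : z = succFst x
  · rw [if_pos h₁, if_neg (h₁ ▸ succFst_ne_succSnd x), h₁, add_zero]
  by_cases h₂ : z = succSnd x
  · rw [if_neg h₁, if_pos h₂, h₂, zero_add]
  · rw [if_neg h₁, if_neg h₂, urnStep_of_ne h₁ h₂, ENNReal.ofReal_zero, add_zero]

lemma ite_le_pathTies_cons {n : ℕ} (x : ℕ × ℕ) (w : Fin (t + 1) → ℕ × ℕ) :
    (if n ≤ pathTies (Fin.cons x w : Fin (t + 2) → ℕ × ℕ) then
        pathWeight β r (Fin.cons x w : Fin (t + 2) → ℕ × ℕ) else 0) =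
      ENNReal.ofReal (urnStep β r x (succFst x)) *
          (if w 0 = succFst x ∧ n - tieInd x ≤ pathTies w then pathWeight β r w else 0) +
        ENNReal.ofReal (urnStep β r x (succSnd x)) *
          (if w 0 = succSnd x ∧ n - tieInd x ≤ pathTies w then pathWeight β r w else 0) := by
  rw [pathTies_cons, pathWeight_cons, ofReal_urnStep]
  have := succFst_ne_succSnd x
  simp only [ite_and]
  split_ifs <;> first | omega | simp_all

lemma tsum_pathWeight (hr : 0 < r) (t n : ℕ) (hx : x ≠ 0) :
    ∑' v : Fin (t + 1) → ℕ × ℕ, (if v 0 = x ∧ n ≤ pathTies v then pathWeight β r v else 0) =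
      ENNReal.ofReal (tieProb β r t n x) := by
  induction t generalizing n x with
  | zero =>
    rw [← (Equiv.funUnique (Fin 1) (ℕ × ℕ)).symm.tsum_eq, tsum_eq_single x]
    · simp only [Equiv.funUnique_symm_apply, uniqueElim_const, pathTies, pathWeight, true_and,
        Finset.sum_const, Finset.card_univ, Fintype.card_fin, zero_add, one_smul,
        Finset.univ_eq_empty, Finset.prod_empty, tieProb_zero]
      split_ifs <;> simp
    · intro y hy
      simp [hy]
  | succ t ih =>
    rw [← (Fin.consEquiv fun _ => ℕ × ℕ).tsum_eq, ENNReal.tsum_prod', tsum_eq_single x]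
    · have e (w : Fin (t + 1) → ℕ × ℕ) : (Fin.consEquiv fun _ => ℕ × ℕ) (x, w) = Fin.cons x w := rfl
      simp only [e, Fin.cons_zero, true_and]
      have hp := urnStep_nonneg (β := β) hr.le x
      have hq := tieProb_nonneg (β := β) hr.le t (n - tieInd x)
      rw [tsum_congr (ite_le_pathTies_cons x), ENNReal.tsum_add, ENNReal.tsum_mul_left,
        ENNReal.tsum_mul_left, ih _ (succFst_ne_zero x), ih _ (succSnd_ne_zero x), tieProb_succ,
        expectNext,
        ENNReal.ofReal_add (mul_nonneg (hp _) (hq _)) (mul_nonneg (hp _) (hq _)),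
        ENNReal.ofReal_mul (hp _), ENNReal.ofReal_mul (hp _)]
    · intro y hy
      simp [hy]

end paths

def pathPrefix (t : ℕ) (ω : ℕ → ℕ × ℕ) : Fin (t + 1) → ℕ × ℕ := fun i => ω i

lemma measurable_pathPrefix (t : ℕ) : Measurable (pathPrefix t) :=
  measurable_pi_lambda _ fun _ => measurable_pi_apply _

lemma numTiesUpTo_eq_pathTies (ω : ℕ → ℕ × ℕ) (t : ℕ) :
    numTiesUpTo ω t = pathTies (pathPrefix t ω) := by
  rw [numTiesUpTo, Finset.card_filter, ← Fin.sum_univ_eq_sum_range]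
  rfl

lemma monotone_numTiesUpTo (ω : ℕ → ℕ × ℕ) : Monotone (numTiesUpTo ω) := fun _ _ h =>
  Finset.card_le_card (Finset.filter_subset_filter _ (Finset.range_subset_range.2 (by omega)))

lemma natCast_le_intensity_iff (ω : ℕ → ℕ × ℕ) (n : ℕ) :
    (n : ℕ∞) ≤ intensity ω ↔ ∃ t, n ≤ numTiesUpTo ω t := by
  constructor
  · intro h
    obtain ⟨T, hT, hTn⟩ := Set.exists_subset_encard_eq h
    obtain ⟨T, rfl⟩ := (Set.finite_of_encard_eq_coe hTn).exists_finset_coe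
    obtain ⟨t, ht⟩ := T.bddAbove
    refine ⟨t, ?_⟩
    rw [Set.encard_coe_eq_coe_finsetCard, Nat.cast_inj] at hTn
    rw [← hTn, numTiesUpTo]
    exact Finset.card_le_card fun j hj =>
      Finset.mem_filter.2 ⟨Finset.mem_range.2 (Nat.lt_succ_of_le (ht hj)), hT hj⟩
  · rintro ⟨t, ht⟩
    calc (n : ℕ∞) ≤ numTiesUpTo ω t := Nat.cast_le.2 ht
      _ = (↑((Finset.range (t + 1)).filter fun j => (ω j).1 = (ω j).2) : Set ℕ).encard :=
        (Set.encard_coe_eq_coe_finsetCard _).symm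
      _ ≤ intensity ω := Set.encard_le_encard fun j hj => (Finset.mem_filter.1 hj).2

end Urn

namespace IsUrnProcess

open Urn

variable {β r : ℝ} {μ : Measure (ℕ → ℕ × ℕ)} {x₀ : ℕ × ℕ}

lemma measure_start (hμ : IsUrnProcess μ β r x₀) : μ {ω | ω 0 = x₀} = 1 := by
  have h := hμ.2 0 (fun _ => x₀) rfl
  simp only [Nat.le_zero, forall_eq, Finset.range_zero, Finset.prod_empty] at h
  have := hμ.1
  rw [← ENNReal.ofReal_toReal (measure_ne_top μ _), h, ENNReal.ofReal_one]

lemma measure_pathPrefix_preimage (hμ : IsUrnProcess μ β r x₀) (hr : 0 ≤ r) {t : ℕ}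
    (v : Fin (t + 1) → ℕ × ℕ) :
    μ (pathPrefix t ⁻¹' {v}) = if v 0 = x₀ then pathWeight β r v else 0 := by
  have := hμ.1
  split_ifs with hv
  · set path : ℕ → ℕ × ℕ := fun s => v (Fin.clamp s t)
    have hpath (i : Fin (t + 1)) : path i = v i :=
      congrArg v (Fin.ext (by rw [Fin.coe_clamp]; exact min_eq_left (Nat.lt_succ_iff.1 i.isLt)))
    have hcyl : pathPrefix t ⁻¹' {v} = {ω | ∀ s ≤ t, ω s = path s} := by
      ext ω
      simp only [Set.mem_preimage, Set.mem_singleton_iff, funext_iff, pathPrefix, Set.mem_ofPred_eq]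
      exact ⟨fun h s hs => (h ⟨s, by omega⟩).trans (hpath ⟨s, by omega⟩).symm,
        fun h i => (h i (Nat.lt_succ_iff.1 i.isLt)).trans (hpath i)⟩
    rw [hcyl, ← ENNReal.ofReal_toReal (measure_ne_top μ _),
      hμ.2 t path ((hpath 0).trans hv), ← Fin.prod_univ_eq_prod_range,
      ENNReal.ofReal_prod_of_nonneg fun _ _ => urnStep_nonneg hr _ _, pathWeight]
    simp only [← hpath, Fin.val_castSucc, Fin.val_succ]
  · refine measure_mono_null (fun ω hω => ?_) ((prob_compl_eq_zero_iff ?_).2 hμ.measure_start)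
    · simp only [Set.mem_preimage, Set.mem_singleton_iff] at hω
      exact fun h => hv (hω ▸ h)
    · exact measurableSet_eq_fun (measurable_pi_apply 0) measurable_const

lemma measure_numTiesUpTo (hμ : IsUrnProcess μ β r x₀) (hr : 0 < r) (hx : x₀ ≠ 0)
    (t n : ℕ) : μ {ω | n ≤ numTiesUpTo ω t} = ENNReal.ofReal (tieProb β r t n x₀) := by
  have hset : {ω | n ≤ numTiesUpTo ω t} = pathPrefix t ⁻¹' {v | n ≤ pathTies v} := by
    ext ω; simp [numTiesUpTo_eq_pathTies]
  rw [hset, ← tsum_measure_preimage_singleton (Set.to_countable _)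
      fun v _ => measurable_pathPrefix t (measurableSet_singleton v), ← tsum_pathWeight hr t n hx,
    tsum_subtype _ fun v => μ (pathPrefix t ⁻¹' {v})]
  refine tsum_congr fun v => ?_
  rw [Set.indicator_apply, hμ.measure_pathPrefix_preimage hr.le]
  by_cases h : n ≤ pathTies v <;> simp [h]

lemma measure_natCast_le_intensity (hμ : IsUrnProcess μ β r x₀) (hr : 0 < r) (hx : x₀ ≠ 0)
    (n : ℕ) : μ {ω | (n : ℕ∞) ≤ intensity ω} = ⨆ t, ENNReal.ofReal (tieProb β r t n x₀) := by
  have hset : {ω | (n : ℕ∞) ≤ intensity ω} = ⋃ t, {ω | n ≤ numTiesUpTo ω t} := by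
    ext ω; simp [natCast_le_intensity_iff]
  rw [hset, Monotone.measure_iUnion fun s t hst ω hω => hω.trans (monotone_numTiesUpTo ω hst)]
  simp only [hμ.measure_numTiesUpTo hr hx]

end IsUrnProcess

theorem stmt_4_general (β r : ℝ) (hβ : 0 ≤ β) (hr : 1 ≤ r)
    (x₀ : ℕ × ℕ) (hx₁ : 0 < x₀.1)
    (μ μ₀ : Measure (ℕ → ℕ × ℕ))
    (hμ : IsUrnProcess μ β r x₀) (hμ₀ : IsUrnProcess μ₀ 0 r x₀) :
    ∀ n : ℕ, μ {ω | (n : ℕ∞) ≤ intensity ω} ≤ μ₀ {ω | (n : ℕ∞) ≤ intensity ω} := by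
  intro n
  have hr₀ : 0 < r := by linarith
  have hx : x₀ ≠ 0 := fun h => by simp [h] at hx₁
  rw [hμ.measure_natCast_le_intensity hr₀ hx, hμ₀.measure_natCast_le_intensity hr₀ hx]
  refine iSup_le fun t => ?_
  obtain ⟨s, hs⟩ := Urn.exists_tieProb_le_tieProb_zero hβ hr₀ t n hx
  exact (ENNReal.ofReal_le_ofReal hs).trans (le_iSup_of_le s le_rfl)

/-- For any `β ≥ 0` and `r ≥ 1`, the intensity satisfies
`N(β,r,x₀) ⪯ N(0,r,x₀)`: feedback, regardless of its strength, does not increase the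
number of ties compared to the feedback-free random walk. -/
theorem stmt_4 (β r : ℝ) (hβ : 0 ≤ β) (hr : 1 ≤ r)
    (x₀ : ℕ × ℕ) (hx₁ : 0 < x₀.1) (hx₂ : 0 < x₀.2)
    (μ μ₀ : Measure (ℕ → ℕ × ℕ))
    (hμ : IsUrnProcess μ β r x₀) (hμ₀ : IsUrnProcess μ₀ 0 r x₀) :
    ∀ n : ℕ, μ {ω | (n : ℕ∞) ≤ intensity ω} ≤ μ₀ {ω | (n : ℕ∞) ≤ intensity ω} :=
  stmt_4_general β r hβ hr x₀ hx₁ μ μ₀ hμ hμ₀
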